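/- arXiv:1011.0678 — 5 statements merged into one kernel-verified Lean document; each statement's English description precedes it below -/
import Mathlib

section
/- Let β : I → ℝ be a differentiable positive function on an interval I ⊆ (0,∞) and let c ∈ ℝ. If β(r)^{-3/4} · r^{9/2} · d/dr( β(r)/r² ) = −4c for all r ∈ I, then there exists b ∈ ℝ such that for all r ∈ I one has c/(2r²) + b > 0 and β(r) = r²·( c/(2r²) + b )⁴. -/
/-! With `q = β / r²`, the identity `β ^ (-3/4) r ^ (9/2) = q ^ (-3/4) r³` turns the equation into
`(q ^ (1/4))' = q ^ (-3/4) q' / 4 = -c / r³ = (c / (2 r²))'`, so `q ^ (1/4) - c / (2 r²)` is a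
constant `b` on the interval; raising `q ^ (1/4) = c / (2 r²) + b > 0` to the fourth power
gives `β`. -/

theorem Set.OrdConnected.eq_of_hasDerivWithinAt_zero {s : Set ℝ} {f : ℝ → ℝ}
    (hs : s.OrdConnected) (hf : ∀ x ∈ s, HasDerivWithinAt f 0 s x) {x y : ℝ}
    (hx : x ∈ s) (hy : y ∈ s) : f y = f x := by
  have hle := (convex_iff_ordConnected.mpr hs).norm_image_sub_le_of_norm_hasDerivWithin_le
    hf (C := 0) (fun _ _ => by simp) hx hy
  rwa [zero_mul, norm_le_zero_iff, sub_eq_zero] at hle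

theorem div_sq_rpow_neg_three_div_four_mul_pow_three {β r : ℝ} (hβ : 0 ≤ β) (hr : 0 < r) :
    (β / r ^ 2) ^ (-(3 : ℝ) / 4) * r ^ 3 = β ^ (-(3 : ℝ) / 4) * r ^ ((9 : ℝ) / 2) := by
  rw [Real.div_rpow hβ (by positivity), ← Real.rpow_natCast, ← Real.rpow_natCast,
    ← Real.rpow_mul hr.le, div_mul_eq_mul_div, mul_div_assoc, ← Real.rpow_sub hr]
  norm_num

theorem hasDerivWithinAt_rpow_quarter_sub_div_sq {s : Set ℝ} {q : ℝ → ℝ} {r d c : ℝ}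
    (hr : 0 < r) (hq : 0 < q r) (hd : HasDerivWithinAt q d s r)
    (hode : q r ^ (-(3 : ℝ) / 4) * d = -4 * c / r ^ 3) :
    HasDerivWithinAt (fun x => q x ^ (1 / 4 : ℝ) - c / (2 * x ^ 2)) 0 s r := by
  have hroot : HasDerivWithinAt (fun x => q x ^ (1 / 4 : ℝ)) (-c / r ^ 3) s r := by
    convert hd.rpow_const (p := 1 / 4) (Or.inl hq.ne') using 1
    rw [show (1 / 4 : ℝ) - 1 = -3 / 4 by norm_num]
    linear_combination (-1 / 4 : ℝ) * hode
  have hpole : HasDerivAt (fun x : ℝ => c / (2 * x ^ 2)) (-c / r ^ 3) r := by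
    refine ((hasDerivAt_const r c).div ((hasDerivAt_pow 2 r).const_mul 2)
      (by positivity)).congr_deriv ?_
    field_simp
    ring
  exact (hroot.sub hpole.hasDerivWithinAt).congr_deriv (sub_self _)

/-- Integration of the ODE of Case B of Appendix B: if `β` is a differentiable
positive function on an interval `I ⊆ (0,∞)` with
`β(r)^(−3/4)·r^(9/2)·(β/r²)' = −4c` on `I`, then there is a constant `b` with
`c/(2r²) + b > 0` and `β(r) = r²·(c/(2r²) + b)⁴` on `I`. -/
theorem caseB_ode_integration
    (I : Set ℝ) (hI : I.OrdConnected) (hIsub : I ⊆ Set.Ioi 0)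
    (β : ℝ → ℝ) (c : ℝ)
    (hβpos : ∀ r ∈ I, 0 < β r)
    (hβdiff : DifferentiableOn ℝ β I)
    (hode : ∀ r ∈ I,
      β r ^ (-(3 : ℝ) / 4) * r ^ ((9 : ℝ) / 2)
        * derivWithin (fun s => β s / s ^ 2) I r = -4 * c) :
    ∃ b : ℝ, ∀ r ∈ I, 0 < c / (2 * r ^ 2) + b ∧ β r = r ^ 2 * (c / (2 * r ^ 2) + b) ^ 4 := by
  rcases I.eq_empty_or_nonempty with rfl | ⟨r₀, hr₀⟩
  · exact ⟨0, by simp⟩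
  set F : ℝ → ℝ := fun x => (β x / x ^ 2) ^ (1 / 4 : ℝ) - c / (2 * x ^ 2)
  have hF : ∀ r ∈ I, HasDerivWithinAt F 0 I r := fun r hr => by
    have hr0 : 0 < r := hIsub hr
    have hqdiff : DifferentiableWithinAt ℝ (fun s => β s / s ^ 2) I r :=
      (hβdiff r hr).div (differentiableWithinAt_pow 2) (by positivity)
    refine hasDerivWithinAt_rpow_quarter_sub_div_sq hr0 (div_pos (hβpos r hr) (by positivity))
      hqdiff.hasDerivWithinAt ?_
    rw [eq_div_iff (by positivity), mul_right_comm,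
      div_sq_rpow_neg_three_div_four_mul_pow_three (hβpos r hr).le hr0, hode r hr]
  refine ⟨F r₀, fun r hr => ?_⟩
  have hr0 : 0 < r := hIsub hr
  have hq : 0 < β r / r ^ 2 := div_pos (hβpos r hr) (by positivity)
  have hroot : (β r / r ^ 2) ^ (1 / 4 : ℝ) = c / (2 * r ^ 2) + F r₀ := by
    have hconst := hI.eq_of_hasDerivWithinAt_zero hF hr₀ hr
    simp only [F] at hconst
    linarith
  have hpow : ((β r / r ^ 2) ^ (1 / 4 : ℝ)) ^ 4 = β r / r ^ 2 := by
    rw [← Real.rpow_natCast, ← Real.rpow_mul hq.le]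
    norm_num
  rw [← hroot, hpow]
  exact ⟨by positivity, by field_simp⟩
end

section
/- Let I ⊆ ℝ be an open interval and f : I → ℝ a twice differentiable function satisfying f''(ψ) + 2·f'(ψ)² = exp(−2f(ψ)) for all ψ ∈ I. Then there exist real constants a and b such that exp(2f(ψ)) = ψ² + a·ψ + b for all ψ ∈ I. -/
/-!
With `g = exp (2 f)` one has `g' = 2 f' g` and `(2 f' g)' = 2 g (f'' + 2 f'²) = 2 g exp (-2 f) = 2`,
so `g'' = 2` on the interval and `g` is a monic quadratic there.
-/

open Real

theorem Convex.exists_eq_add_of_hasDerivAt {𝕜 G : Type*} [RCLike 𝕜] [NormedAddCommGroup G]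
    [NormedSpace 𝕜 G] {s : Set 𝕜} {f g f' : 𝕜 → G} (hs : Convex ℝ s)
    (hf : ∀ x ∈ s, HasDerivAt f (f' x) x) (hg : ∀ x ∈ s, HasDerivAt g (f' x) x) :
    ∃ c, ∀ x ∈ s, f x = g x + c := by
  rcases s.eq_empty_or_nonempty with rfl | ⟨x₀, hx₀⟩
  · exact ⟨0, fun _ h => h.elim⟩
  refine ⟨f x₀ - g x₀, fun x hx => ?_⟩
  have hfg : ∀ y ∈ s, HasDerivWithinAt (f - g) 0 s y := fun y hy => by
    simpa using ((hf y hy).sub (hg y hy)).hasDerivWithinAt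
  have := hs.norm_image_sub_le_of_norm_hasDerivWithin_le hfg (fun _ _ => norm_zero.le) hx₀ hx
  rw [zero_mul, norm_le_zero_iff, sub_eq_zero, Pi.sub_apply, Pi.sub_apply] at this
  rw [← this]
  abel

theorem Convex.exists_eq_sq_add_of_hasDerivAt_of_hasDerivAt_two {s : Set ℝ} {g g' : ℝ → ℝ}
    (hs : Convex ℝ s) (hg : ∀ x ∈ s, HasDerivAt g (g' x) x)
    (hg' : ∀ x ∈ s, HasDerivAt g' 2 x) :
    ∃ a b : ℝ, ∀ x ∈ s, g x = x ^ 2 + a * x + b := by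
  obtain ⟨a, ha⟩ := hs.exists_eq_add_of_hasDerivAt hg' fun x _ => by
    simpa using (hasDerivAt_id x).const_mul (2 : ℝ)
  obtain ⟨b, hb⟩ := hs.exists_eq_add_of_hasDerivAt (g := fun x => x ^ 2 + a * x) hg fun x hx => by
    rw [ha x hx]
    simpa using ((hasDerivAt_pow 2 x).fun_add ((hasDerivAt_id x).const_mul a))
  exact ⟨a, b, hb⟩

theorem hasDerivAt_exp_two_mul_mul_two_deriv {f : ℝ → ℝ} {x : ℝ} (hf : DifferentiableAt ℝ f x)
    (hf' : DifferentiableAt ℝ (deriv f) x)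
    (hode : deriv (deriv f) x + 2 * deriv f x ^ 2 = exp (-2 * f x)) :
    HasDerivAt (fun y => exp (2 * f y) * (2 * deriv f y)) 2 x := by
  refine (((hf.hasDerivAt.const_mul 2).exp).mul (hf'.hasDerivAt.const_mul 2)).congr_deriv ?_
  have hexp : exp (2 * f x) * exp (-2 * f x) = 1 := by rw [← exp_add]; simp
  linear_combination 2 * exp (2 * f x) * hode + 2 * hexp

theorem exp_two_f_is_quadratic_general
    (I : Set ℝ) (hIconn : I.OrdConnected)
    (f : ℝ → ℝ)
    (hf : ∀ ψ ∈ I, DifferentiableAt ℝ f ψ)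
    (hf' : ∀ ψ ∈ I, DifferentiableAt ℝ (deriv f) ψ)
    (hode : ∀ ψ ∈ I, deriv (deriv f) ψ + 2 * (deriv f ψ) ^ 2 = Real.exp (-2 * f ψ)) :
    ∃ a b : ℝ, ∀ ψ ∈ I, Real.exp (2 * f ψ) = ψ ^ 2 + a * ψ + b :=
  hIconn.convex.exists_eq_sq_add_of_hasDerivAt_of_hasDerivAt_two
    (fun ψ hψ => ((hf ψ hψ).hasDerivAt.const_mul 2).exp)
    (fun ψ hψ => hasDerivAt_exp_two_mul_mul_two_deriv (hf ψ hψ) (hf' ψ hψ) (hode ψ hψ))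

/-- If `f` is twice differentiable on an open interval `I` and satisfies
`f'' + 2 f'² = exp(−2f)` there, then `exp(2f(ψ)) = ψ² + aψ + b` on `I` for some
real constants `a`, `b` (the fixing of the functional relation `e^{2U} = b + aΨ + Ψ²`
in Section 5 of the paper). -/
theorem exp_two_f_is_quadratic
    (I : Set ℝ) (hIopen : IsOpen I) (hIconn : I.OrdConnected)
    (f : ℝ → ℝ)
    (hf : ∀ ψ ∈ I, DifferentiableAt ℝ f ψ)
    (hf' : ∀ ψ ∈ I, DifferentiableAt ℝ (deriv f) ψ)
    (hode : ∀ ψ ∈ I, deriv (deriv f) ψ + 2 * (deriv f ψ) ^ 2 = Real.exp (-2 * f ψ)) :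
    ∃ a b : ℝ, ∀ ψ ∈ I, Real.exp (2 * f ψ) = ψ ^ 2 + a * ψ + b :=
  exp_two_f_is_quadratic_general I hIconn f hf hf' hode
end

section
/- Let A, B, c, ε be real numbers with A·B < 0, A + B ≠ 0, c² > 1 and ε² = 1. Set k = 4·√(|AB|(c² − 1)), a₀ = 2·√(c² − 1), Q = ε/(4|AB|·√(c² − 1)) and M = (B − A)/(8|AB|^{3/2}·√(c² − 1)). Let I ⊆ (0,∞) be an interval on which 1 − kBr > 0 and 1 + kAr > 0, and define R(r) = √((1 − kBr)/(1 + kAr)). Then for every r ∈ I: (i) (R(r)² − 1)² = 4|AB|·a₀²·(A·R(r)² + B)²·r²; (ii) a₀²·R(r)²·(A + B)² = 4|AB|(c² − 1)·(R(r)² − 1)²·(1 − 2M/r + Q²/r²); (iii) R'(r)²·(R(r)² − 1)²·(1 − 2M/r + Q²/r²) = a₀²·(A·R(r)² + B)⁴. -/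
/-!
Write `u = 1 − kBr` and `v = 1 + kAr`, so that `R² = u / v`. Since `A·u + B·v = A + B` and
`u − v = −k(A + B)r`, one has `A R² + B = (A + B)/v` and `R² − 1 = −k(A + B)r/v`, while
`(R²)' = −k(A + B)/v²`. With `k² = 4|AB|a₀²`, the parameters `M` and `Q` are exactly those for which
`AB = −|AB|` makes the Reissner–Nordström factor factorise as `1 − 2M/r + Q²/r² = uv/(k²|AB|r²)`.
All three identities are then rational identities in `u`, `v`, `k` and `r`.
-/

open Real

noncomputable def reissnerNordstromFactor (M Q r : ℝ) : ℝ := 1 - 2 * M / r + Q ^ 2 / r ^ 2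

lemma rpow_three_halves {x : ℝ} (hx : 0 ≤ x) : x ^ ((3 : ℝ) / 2) = x * √x := by
  rw [show (3 : ℝ) / 2 = 1 + 1 / 2 by norm_num, rpow_add' hx (by norm_num), rpow_one,
    sqrt_eq_rpow]

lemma sq_eq_of_eq_mul_sqrt {a x y : ℝ} (hx : 0 ≤ x) (h : a = y * √x) : a ^ 2 = y ^ 2 * x := by
  rw [h, mul_pow, sq_sqrt hx]

section Parameters

variable {A B c ε k : ℝ}

lemma mass_eq (hk : k = 4 * √(|A * B| * (c ^ 2 - 1))) :
    (B - A) / (8 * |A * B| ^ ((3 : ℝ) / 2) * √(c ^ 2 - 1)) = (B - A) / (2 * |A * B| * k) := by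
  rw [rpow_three_halves (abs_nonneg _), hk, sqrt_mul (abs_nonneg _)]
  ring

lemma charge_sq_eq (hc : 1 < c ^ 2) (hε : ε ^ 2 = 1) (hk : k = 4 * √(|A * B| * (c ^ 2 - 1))) :
    (ε / (4 * |A * B| * √(c ^ 2 - 1))) ^ 2 = 1 / (|A * B| * k ^ 2) := by
  have hc' : 0 ≤ c ^ 2 - 1 := by linarith
  rw [sq_eq_of_eq_mul_sqrt (by positivity) hk, div_pow, hε, mul_pow, sq_sqrt hc']
  ring

end Parameters

lemma deriv_sqrt_sq {f : ℝ → ℝ} {f' x : ℝ} (hf : HasDerivAt f f' x) (hx : 0 < f x) :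
    deriv (fun y => √(f y)) x ^ 2 = f' ^ 2 / (4 * f x) := by
  rw [(hf.sqrt hx.ne').deriv, div_pow, mul_pow, sq_sqrt hx.le]
  ring

section Coordinates

variable {A B c k a₀ r : ℝ}

lemma reissnerNordstromFactor_eq (hAB : A * B < 0) (hk : k ≠ 0) (hr : r ≠ 0) {Q : ℝ}
    (hQ : Q ^ 2 = 1 / (|A * B| * k ^ 2)) :
    reissnerNordstromFactor ((B - A) / (2 * |A * B| * k)) Q r
      = (1 - k * B * r) * (1 + k * A * r) / (k ^ 2 * |A * B| * r ^ 2) := by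
  have hA : A ≠ 0 := left_ne_zero_of_mul hAB.ne
  have hB : B ≠ 0 := right_ne_zero_of_mul hAB.ne
  rw [reissnerNordstromFactor, hQ, abs_of_neg hAB]
  field_simp
  ring

lemma hasDerivAt_div_linear (hv : 1 + k * A * r ≠ 0) :
    HasDerivAt (fun x => (1 - k * B * x) / (1 + k * A * x))
      (-(k * (A + B)) / (1 + k * A * r) ^ 2) r := by
  have hu : HasDerivAt (fun x => 1 - k * B * x) (-(k * B)) r := by
    simpa using ((hasDerivAt_id r).const_mul (k * B)).const_sub 1
  have hv' : HasDerivAt (fun x => 1 + k * A * x) (k * A) r := by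
    simpa using ((hasDerivAt_id r).const_mul (k * A)).const_add 1
  exact (hu.div hv' hv).congr_deriv (by ring)

lemma div_linear_sub_one (hv : 1 + k * A * r ≠ 0) :
    (1 - k * B * r) / (1 + k * A * r) - 1 = -(k * (A + B) * r) / (1 + k * A * r) := by
  rw [div_sub_one hv]
  ring

lemma mul_div_linear_add (hv : 1 + k * A * r ≠ 0) :
    A * ((1 - k * B * r) / (1 + k * A * r)) + B = (A + B) / (1 + k * A * r) := by
  rw [eq_div_iff hv, add_mul, mul_assoc, div_mul_cancel₀ _ hv]
  ring

lemma angular_coefficient_eq (hv : 1 + k * A * r ≠ 0) (hka : k ^ 2 = 4 * |A * B| * a₀ ^ 2) :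
    ((1 - k * B * r) / (1 + k * A * r) - 1) ^ 2
      = 4 * |A * B| * a₀ ^ 2 * (A * ((1 - k * B * r) / (1 + k * A * r)) + B) ^ 2 * r ^ 2 := by
  rw [div_linear_sub_one hv, mul_div_linear_add hv, ← hka]
  ring

lemma timeTime_coefficient_eq (hAB : A * B ≠ 0) (hk : k ≠ 0) (hr : r ≠ 0)
    (hv : 1 + k * A * r ≠ 0) (ha₀ : a₀ ^ 2 = 4 * (c ^ 2 - 1)) :
    a₀ ^ 2 * ((1 - k * B * r) / (1 + k * A * r)) * (A + B) ^ 2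
      = 4 * |A * B| * (c ^ 2 - 1) * ((1 - k * B * r) / (1 + k * A * r) - 1) ^ 2
        * ((1 - k * B * r) * (1 + k * A * r) / (k ^ 2 * |A * B| * r ^ 2)) := by
  have hAB' : |A * B| ≠ 0 := abs_ne_zero.2 hAB
  rw [div_linear_sub_one hv, ha₀]
  generalize 1 - k * B * r = u
  generalize 1 + k * A * r = v at hv ⊢
  field_simp

lemma radial_coefficient_eq (hAB : A * B ≠ 0) (hr : r ≠ 0)
    (hu : 1 - k * B * r ≠ 0) (hv : 1 + k * A * r ≠ 0) (hka : k ^ 2 = 4 * |A * B| * a₀ ^ 2) :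
    k ^ 2 * (A + B) ^ 2 / (4 * (1 - k * B * r) * (1 + k * A * r) ^ 3)
        * ((1 - k * B * r) / (1 + k * A * r) - 1) ^ 2
        * ((1 - k * B * r) * (1 + k * A * r) / (k ^ 2 * |A * B| * r ^ 2))
      = a₀ ^ 2 * (A * ((1 - k * B * r) / (1 + k * A * r)) + B) ^ 4 := by
  have hAB' : |A * B| ≠ 0 := abs_ne_zero.2 hAB
  rw [div_linear_sub_one hv, mul_div_linear_add hv]
  generalize 1 - k * B * r = u at hu ⊢
  generalize 1 + k * A * r = v at hv ⊢
  field_simp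
  linear_combination (A + B) ^ 4 * hka

lemma deriv_sqrt_div_linear_sq (hu : 0 < 1 - k * B * r) (hv : 0 < 1 + k * A * r) :
    deriv (fun x => √((1 - k * B * x) / (1 + k * A * x))) r ^ 2
      = k ^ 2 * (A + B) ^ 2 / (4 * (1 - k * B * r) * (1 + k * A * r) ^ 3) := by
  rw [deriv_sqrt_sq (hasDerivAt_div_linear hv.ne') (div_pos hu hv)]
  field_simp

end Coordinates

theorem reissner_nordstrom_coordinate_change_general
    (A B c ε : ℝ) (hAB : A * B < 0)
    (hc : 1 < c ^ 2) (hε : ε ^ 2 = 1)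
    (k a₀ Q M : ℝ)
    (hk : k = 4 * Real.sqrt (|A * B| * (c ^ 2 - 1)))
    (ha₀ : a₀ = 2 * Real.sqrt (c ^ 2 - 1))
    (hQ : Q = ε / (4 * |A * B| * Real.sqrt (c ^ 2 - 1)))
    (hM : M = (B - A) / (8 * |A * B| ^ ((3 : ℝ) / 2) * Real.sqrt (c ^ 2 - 1)))
    (I : Set ℝ) (hIsub : I ⊆ Set.Ioi 0)
    (hcond : ∀ r ∈ I, 0 < 1 - k * B * r ∧ 0 < 1 + k * A * r)
    (R : ℝ → ℝ) (hR : ∀ r, R r = Real.sqrt ((1 - k * B * r) / (1 + k * A * r))) :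
    ∀ r ∈ I,
      ((R r ^ 2 - 1) ^ 2 = 4 * |A * B| * a₀ ^ 2 * (A * R r ^ 2 + B) ^ 2 * r ^ 2) ∧
      (a₀ ^ 2 * R r ^ 2 * (A + B) ^ 2
        = 4 * |A * B| * (c ^ 2 - 1) * (R r ^ 2 - 1) ^ 2
          * (1 - 2 * M / r + Q ^ 2 / r ^ 2)) ∧
      ((deriv R r) ^ 2 * (R r ^ 2 - 1) ^ 2 * (1 - 2 * M / r + Q ^ 2 / r ^ 2)
        = a₀ ^ 2 * (A * R r ^ 2 + B) ^ 4) := by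
  intro r hr
  obtain ⟨hu, hv⟩ := hcond r hr
  have hr0 : r ≠ 0 := (hIsub hr).ne'
  have hc' : 0 < c ^ 2 - 1 := by linarith
  have hk0 : k ≠ 0 := by
    rw [hk]
    exact mul_ne_zero four_ne_zero (sqrt_pos.2 (mul_pos (abs_pos.2 hAB.ne) hc')).ne'
  have ha₀sq : a₀ ^ 2 = 4 * (c ^ 2 - 1) := by
    rw [sq_eq_of_eq_mul_sqrt hc'.le ha₀]
    norm_num
  have hka : k ^ 2 = 4 * |A * B| * a₀ ^ 2 := by
    rw [sq_eq_of_eq_mul_sqrt (by positivity) hk, ha₀sq]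
    ring
  have hF : 1 - 2 * M / r + Q ^ 2 / r ^ 2
      = (1 - k * B * r) * (1 + k * A * r) / (k ^ 2 * |A * B| * r ^ 2) := by
    rw [hM, mass_eq hk]
    exact reissnerNordstromFactor_eq hAB hk0 hr0 (hQ ▸ charge_sq_eq hc hε hk)
  have hRsq : R r ^ 2 = (1 - k * B * r) / (1 + k * A * r) := by
    rw [hR, sq_sqrt (div_pos hu hv).le]
  have hR' : deriv R r ^ 2
      = k ^ 2 * (A + B) ^ 2 / (4 * (1 - k * B * r) * (1 + k * A * r) ^ 3) := by
    rw [funext hR]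
    exact deriv_sqrt_div_linear_sq hu hv
  rw [hRsq, hF, hR']
  exact ⟨angular_coefficient_eq hv.ne' hka,
    timeTime_coefficient_eq hAB.ne hk0 hr0 hv.ne' ha₀sq,
    radial_coefficient_eq hAB.ne hr0 hu.ne' hv.ne' hka⟩

/-- The coordinate change of case (ii) of Section 5.2 of the paper (`AB < 0`,
spherical surfaces, `A + B ≠ 0`) brings the conformastat electrovacuum metric to the
exterior Reissner–Nordström form: with `R(r) = √((1 − kBr)/(1 + kAr))`, identity (i)
matches the angular coefficient, (ii) the time-time coefficient and (iii) the radial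
coefficient. -/
theorem reissner_nordstrom_coordinate_change
    (A B c ε : ℝ) (hAB : A * B < 0) (hABsum : A + B ≠ 0)
    (hc : 1 < c ^ 2) (hε : ε ^ 2 = 1)
    (k a₀ Q M : ℝ)
    (hk : k = 4 * Real.sqrt (|A * B| * (c ^ 2 - 1)))
    (ha₀ : a₀ = 2 * Real.sqrt (c ^ 2 - 1))
    (hQ : Q = ε / (4 * |A * B| * Real.sqrt (c ^ 2 - 1)))
    (hM : M = (B - A) / (8 * |A * B| ^ ((3 : ℝ) / 2) * Real.sqrt (c ^ 2 - 1)))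
    (I : Set ℝ) (hIint : I.OrdConnected) (hIsub : I ⊆ Set.Ioi 0)
    (hcond : ∀ r ∈ I, 0 < 1 - k * B * r ∧ 0 < 1 + k * A * r)
    (R : ℝ → ℝ) (hR : ∀ r, R r = Real.sqrt ((1 - k * B * r) / (1 + k * A * r))) :
    ∀ r ∈ I,
      ((R r ^ 2 - 1) ^ 2 = 4 * |A * B| * a₀ ^ 2 * (A * R r ^ 2 + B) ^ 2 * r ^ 2) ∧
      (a₀ ^ 2 * R r ^ 2 * (A + B) ^ 2
        = 4 * |A * B| * (c ^ 2 - 1) * (R r ^ 2 - 1) ^ 2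
          * (1 - 2 * M / r + Q ^ 2 / r ^ 2)) ∧
      ((deriv R r) ^ 2 * (R r ^ 2 - 1) ^ 2 * (1 - 2 * M / r + Q ^ 2 / r ^ 2)
        = a₀ ^ 2 * (A * R r ^ 2 + B) ^ 4) :=
  reissner_nordstrom_coordinate_change_general A B c ε hAB hc hε k a₀ Q M hk ha₀ hQ hM I hIsub hcond
    R hR
end

section
/- Let A, B, c, ε be real numbers with A·B > 0, c² > 1 and ε² = 1. Set k = 4·√(AB(c² − 1)), a₀ = 2·√(c² − 1), Q = ε/(4AB·√(c² − 1)) and M = (B − A)/(8(AB)^{3/2}·√(c² − 1)). Let I ⊆ (0,∞) be an interval on which 1 − kBr > 0 and 1 + kAr > 0, and define R(r) = √((1 − kBr)/(1 + kAr)). Then for every r ∈ I: (i) (R(r)² − 1)² = 4AB·a₀²·(A·R(r)² + B)²·r²; (ii) a₀²·R(r)²·(A + B)² = 4AB(c² − 1)·(R(r)² − 1)²·(−1 − 2M/r + Q²/r²); (iii) R'(r)²·(R(r)² − 1)²·(−1 − 2M/r + Q²/r²) = a₀²·(A·R(r)² + B)⁴. -/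
/-!
With `k = 4√(AB(c² − 1))`, the definition of `R` is the relation `R² (1 + kAr) = 1 − kBr`,
which is linear in `r`: it gives `R² − 1 = −kr (AR² + B)` and `A + B = (1 + kAr)(AR² + B)`.
The choice of `M` and `Q` makes the Reissner–Nordström function factor as
`(1 − kBr)(1 + kAr) / (k² AB r²)`, and `R'` is read off the quotient rule. Substituting these,
each of the three identities becomes a polynomial identity, using `k² = 4AB a₀²`.
-/

namespace HyperbolicRN

theorem rpow_three_halves_eq_mul_sqrt {x : ℝ} (hx : 0 < x) : x ^ ((3 : ℝ) / 2) = x * √x := by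
  rw [show (3 : ℝ) / 2 = 1 + 1 / 2 by norm_num, Real.rpow_add hx, Real.rpow_one,
    Real.sqrt_eq_rpow]

section Parameters

variable {A B c ε k a₀ Q M : ℝ}

theorem k_sq_eq (hc : 1 < c ^ 2) (hAB : 0 < A * B)
    (hk : k = 4 * √(A * B * (c ^ 2 - 1))) : k ^ 2 = 16 * (A * B) * (c ^ 2 - 1) := by
  rw [hk, mul_pow, Real.sq_sqrt (by nlinarith)]
  ring

theorem M_eq_div (hAB : 0 < A * B) (hk : k = 4 * √(A * B * (c ^ 2 - 1)))
    (hM : M = (B - A) / (8 * (A * B) ^ ((3 : ℝ) / 2) * √(c ^ 2 - 1))) :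
    M = (B - A) / (2 * k * (A * B)) := by
  rw [hM, hk, rpow_three_halves_eq_mul_sqrt hAB, Real.sqrt_mul hAB.le]
  ring

theorem Q_sq_eq (hc : 1 < c ^ 2) (hAB : 0 < A * B) (hε : ε ^ 2 = 1)
    (hk : k = 4 * √(A * B * (c ^ 2 - 1))) (hQ : Q = ε / (4 * A * B * √(c ^ 2 - 1))) :
    Q ^ 2 = 1 / (k ^ 2 * (A * B)) := by
  rw [k_sq_eq hc hAB hk, hQ, div_pow, hε, mul_pow, Real.sq_sqrt (by linarith)]
  ring

end Parameters

/-- The zeros of the Reissner–Nordström function are the radii where `R` vanishes or blows up. -/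
theorem horizon_factorization {A B k r M Q : ℝ} (hk : k ≠ 0) (hA : A ≠ 0) (hB : B ≠ 0)
    (hr : r ≠ 0) (hM : M = (B - A) / (2 * k * (A * B))) (hQ : Q ^ 2 = 1 / (k ^ 2 * (A * B))) :
    -1 - 2 * M / r + Q ^ 2 / r ^ 2
      = (1 - k * B * r) * (1 + k * A * r) / (k ^ 2 * (A * B) * r ^ 2) := by
  rw [hM, hQ]
  field_simp
  ring

theorem hasDerivAt_sqrt_ratio {A B k r : ℝ} (hu : 0 < 1 - k * B * r) (hv : 0 < 1 + k * A * r) :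
    HasDerivAt (fun x => √((1 - k * B * x) / (1 + k * A * x)))
      (-(k * (A + B)) / ((1 + k * A * r) ^ 2 * (2 * √((1 - k * B * r) / (1 + k * A * r)))))
      r := by
  have hu' : HasDerivAt (fun x => 1 - k * B * x) (-(k * B)) r := by
    simpa using ((hasDerivAt_id r).const_mul (k * B)).const_sub 1
  have hv' : HasDerivAt (fun x => 1 + k * A * x) (k * A) r := by
    simpa using ((hasDerivAt_id r).const_mul (k * A)).const_add 1
  refine ((hu'.div hv' hv.ne').sqrt (div_pos hu hv).ne').congr_deriv ?_
  simp only [Pi.div_apply]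
  field_simp
  ring

section Identities

variable {A B k a₀ r ρ : ℝ} (hρ : ρ ^ 2 * (1 + k * A * r) = 1 - k * B * r)
include hρ

theorem sq_sub_one_eq : ρ ^ 2 - 1 = -(k * r * (A * ρ ^ 2 + B)) := by
  linear_combination hρ

theorem add_eq_mul : A + B = (1 + k * A * r) * (A * ρ ^ 2 + B) := by
  linear_combination (-A) * hρ

theorem angular_coeff_eq (hk : k ^ 2 = 4 * (A * B) * a₀ ^ 2) :
    (ρ ^ 2 - 1) ^ 2 = 4 * (A * B) * a₀ ^ 2 * (A * ρ ^ 2 + B) ^ 2 * r ^ 2 := by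
  rw [sq_sub_one_eq hρ, ← hk]
  ring

theorem time_coeff_eq {C : ℝ} (ha₀ : a₀ ^ 2 = 4 * C) (hk : k ≠ 0) (hA : A ≠ 0)
    (hB : B ≠ 0) (hr : r ≠ 0) :
    a₀ ^ 2 * ρ ^ 2 * (A + B) ^ 2 = 4 * (A * B) * C * (ρ ^ 2 - 1) ^ 2
      * ((1 - k * B * r) * (1 + k * A * r) / (k ^ 2 * (A * B) * r ^ 2)) := by
  rw [sq_sub_one_eq hρ, add_eq_mul hρ, ← hρ, ha₀]
  field_simp

theorem radial_coeff_eq (hk : k ^ 2 = 4 * (A * B) * a₀ ^ 2) (hA : A ≠ 0)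
    (hB : B ≠ 0) (hr : r ≠ 0) (hρ0 : ρ ≠ 0) (hv : 1 + k * A * r ≠ 0) :
    (-(k * (A + B)) / ((1 + k * A * r) ^ 2 * (2 * ρ))) ^ 2 * (ρ ^ 2 - 1) ^ 2
      * ((1 - k * B * r) * (1 + k * A * r) / (k ^ 2 * (A * B) * r ^ 2))
      = a₀ ^ 2 * (A * ρ ^ 2 + B) ^ 4 := by
  rw [sq_sub_one_eq hρ, add_eq_mul hρ, ← hρ]
  field_simp
  linear_combination (A * ρ ^ 2 + B) ^ 4 * hk

end Identities

end HyperbolicRN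

theorem hyperbolic_reissner_nordstrom_coordinate_change_general
    (A B c ε : ℝ) (hAB : 0 < A * B)
    (hc : 1 < c ^ 2) (hε : ε ^ 2 = 1)
    (k a₀ Q M : ℝ)
    (hk : k = 4 * Real.sqrt (A * B * (c ^ 2 - 1)))
    (ha₀ : a₀ = 2 * Real.sqrt (c ^ 2 - 1))
    (hQ : Q = ε / (4 * A * B * Real.sqrt (c ^ 2 - 1)))
    (hM : M = (B - A) / (8 * (A * B) ^ ((3 : ℝ) / 2) * Real.sqrt (c ^ 2 - 1)))
    (I : Set ℝ) (hIsub : I ⊆ Set.Ioi 0)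
    (hcond : ∀ r ∈ I, 0 < 1 - k * B * r ∧ 0 < 1 + k * A * r)
    (R : ℝ → ℝ) (hR : ∀ r, R r = Real.sqrt ((1 - k * B * r) / (1 + k * A * r))) :
    ∀ r ∈ I,
      ((R r ^ 2 - 1) ^ 2 = 4 * (A * B) * a₀ ^ 2 * (A * R r ^ 2 + B) ^ 2 * r ^ 2) ∧
      (a₀ ^ 2 * R r ^ 2 * (A + B) ^ 2
        = 4 * (A * B) * (c ^ 2 - 1) * (R r ^ 2 - 1) ^ 2
          * (-1 - 2 * M / r + Q ^ 2 / r ^ 2)) ∧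
      ((deriv R r) ^ 2 * (R r ^ 2 - 1) ^ 2 * (-1 - 2 * M / r + Q ^ 2 / r ^ 2)
        = a₀ ^ 2 * (A * R r ^ 2 + B) ^ 4) := by
  have hA : A ≠ 0 := left_ne_zero_of_mul hAB.ne'
  have hB : B ≠ 0 := right_ne_zero_of_mul hAB.ne'
  have ha₀_sq : a₀ ^ 2 = 4 * (c ^ 2 - 1) := by
    rw [ha₀, mul_pow, Real.sq_sqrt (by linarith)]
    norm_num
  have hk_a₀ : k ^ 2 = 4 * (A * B) * a₀ ^ 2 := by
    rw [HyperbolicRN.k_sq_eq hc hAB hk, ha₀_sq]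
    ring
  have hk0 : k ≠ 0 := by
    rintro rfl
    nlinarith [HyperbolicRN.k_sq_eq hc hAB hk]
  intro r hr
  obtain ⟨hu, hv⟩ := hcond r hr
  have hr0 : r ≠ 0 := (hIsub hr).ne'
  have hRr : R r ^ 2 * (1 + k * A * r) = 1 - k * B * r := by
    rw [hR, Real.sq_sqrt (div_nonneg hu.le hv.le), div_mul_cancel₀ _ hv.ne']
  have hR0 : R r ≠ 0 := by
    rw [hR]
    exact (Real.sqrt_pos.mpr (div_pos hu hv)).ne'
  have hR' : HasDerivAt R (-(k * (A + B)) / ((1 + k * A * r) ^ 2 * (2 * R r))) r := by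
    rw [funext hR]
    exact HyperbolicRN.hasDerivAt_sqrt_ratio hu hv
  rw [HyperbolicRN.horizon_factorization hk0 hA hB hr0 (HyperbolicRN.M_eq_div hAB hk hM)
    (HyperbolicRN.Q_sq_eq hc hAB hε hk hQ), hR'.deriv]
  exact ⟨HyperbolicRN.angular_coeff_eq hRr hk_a₀,
    HyperbolicRN.time_coeff_eq hRr ha₀_sq hk0 hA hB hr0,
    HyperbolicRN.radial_coeff_eq hRr hk_a₀ hA hB hr0 hR0 hv.ne'⟩

/-- The coordinate change of case (iii) of Section 5.2 of the paper (`AB > 0`,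
hyperbolic surfaces) brings the conformastat electrovacuum metric to the hyperbolic
counterpart of the Reissner–Nordström form: with `R(r) = √((1 − kBr)/(1 + kAr))`,
identity (i) matches the angular coefficient, (ii) the time-time coefficient and
(iii) the radial coefficient. -/
theorem hyperbolic_reissner_nordstrom_coordinate_change
    (A B c ε : ℝ) (hAB : 0 < A * B)
    (hc : 1 < c ^ 2) (hε : ε ^ 2 = 1)
    (k a₀ Q M : ℝ)
    (hk : k = 4 * Real.sqrt (A * B * (c ^ 2 - 1)))
    (ha₀ : a₀ = 2 * Real.sqrt (c ^ 2 - 1))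
    (hQ : Q = ε / (4 * A * B * Real.sqrt (c ^ 2 - 1)))
    (hM : M = (B - A) / (8 * (A * B) ^ ((3 : ℝ) / 2) * Real.sqrt (c ^ 2 - 1)))
    (I : Set ℝ) (hIint : I.OrdConnected) (hIsub : I ⊆ Set.Ioi 0)
    (hcond : ∀ r ∈ I, 0 < 1 - k * B * r ∧ 0 < 1 + k * A * r)
    (R : ℝ → ℝ) (hR : ∀ r, R r = Real.sqrt ((1 - k * B * r) / (1 + k * A * r))) :
    ∀ r ∈ I,
      ((R r ^ 2 - 1) ^ 2 = 4 * (A * B) * a₀ ^ 2 * (A * R r ^ 2 + B) ^ 2 * r ^ 2) ∧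
      (a₀ ^ 2 * R r ^ 2 * (A + B) ^ 2
        = 4 * (A * B) * (c ^ 2 - 1) * (R r ^ 2 - 1) ^ 2
          * (-1 - 2 * M / r + Q ^ 2 / r ^ 2)) ∧
      ((deriv R r) ^ 2 * (R r ^ 2 - 1) ^ 2 * (-1 - 2 * M / r + Q ^ 2 / r ^ 2)
        = a₀ ^ 2 * (A * R r ^ 2 + B) ^ 4) :=
  hyperbolic_reissner_nordstrom_coordinate_change_general A B c ε hAB hc hε k a₀ Q M hk ha₀ hQ hM I
    hIsub hcond R hR
end

section
/- Let A ∈ ℂ with A ≠ 0, let c be real with c² < 1 and ε real with ε² = 1, and define Q = ε/(4·A·conj(A)·√(1 − c²)) and M = i·(A − conj(A))/(8·(A·conj(A))^{3/2}·√(1 − c²)). Then M is a real number and 4·A·conj(A)·(M² − Q²) = −(A + conj(A))²·Q². In particular M² ≤ Q², with equality if and only if Re A = 0. -/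
open Complex ComplexConjugate
open scoped ComplexOrder

/-!
Write `b = ‖A‖ > 0` and `s = √(1 − c²) > 0`. Since `A · conj A = b²`, `(A · conj A)^{3/2} = b³` and
`i (A − conj A) = −2 Im A`, both `Q = ε / (4 b² s)` and `M = −Im A / (4 b³ s)` are real, and
`ε² = 1`, `b² = (Re A)² + (Im A)²` give `b² (M² − Q²) = −(Re A)² Q²`. As `Q ≠ 0`, the sign of
`M² − Q²` is that of `−(Re A)²`.
-/

lemma Complex.ofReal_sq_cpow_three_halves {b : ℝ} (hb : 0 ≤ b) :
    ((b ^ 2 : ℝ) : ℂ) ^ ((3 : ℂ) / 2) = ((b ^ 3 : ℝ) : ℂ) := by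
  have h : ((3 : ℂ) / 2) = ((3 / 2 : ℝ) : ℂ) := by norm_num
  rw [h, ← ofReal_cpow (by positivity), ← Real.rpow_natCast b 2, ← Real.rpow_mul hb,
    ← Real.rpow_natCast b 3]
  norm_num

lemma Complex.mul_conj_cpow_three_halves (A : ℂ) :
    (A * conj A) ^ ((3 : ℂ) / 2) = ((‖A‖ ^ 3 : ℝ) : ℂ) := by
  rw [mul_conj', ← ofReal_pow, ofReal_sq_cpow_three_halves (norm_nonneg A)]

lemma Complex.I_mul_sub_conj (A : ℂ) : I * (A - conj A) = ((-2 * A.im : ℝ) : ℂ) := by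
  rw [sub_conj]
  push_cast
  linear_combination (2 * (A.im : ℂ)) * I_sq

section RealRelation

variable {b m q x : ℝ}

lemma sq_le_sq_of_mul_sq_sub_sq_eq (h : b ^ 2 * (m ^ 2 - q ^ 2) = -x ^ 2 * q ^ 2) (hb : b ≠ 0) :
    m ^ 2 ≤ q ^ 2 := by
  have hb2 : 0 < b ^ 2 := by positivity
  nlinarith [sq_nonneg (x * q)]

lemma sq_eq_sq_iff_of_mul_sq_sub_sq_eq (h : b ^ 2 * (m ^ 2 - q ^ 2) = -x ^ 2 * q ^ 2)
    (hb : b ≠ 0) (hq : q ≠ 0) : m ^ 2 = q ^ 2 ↔ x = 0 := by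
  constructor
  · intro hmq
    rw [hmq, sub_self, mul_zero, eq_comm, neg_mul, neg_eq_zero] at h
    simpa [hq] using h
  · intro hx
    rw [hx] at h
    simpa [hb, sub_eq_zero] using h

end RealRelation

lemma mul_sq_sub_sq_eq_of_sq_eq_add_sq {b s x y ε : ℝ} (hb : b ≠ 0) (hs : s ≠ 0)
    (hbxy : b ^ 2 = x ^ 2 + y ^ 2) (hε : ε ^ 2 = 1) :
    b ^ 2 * ((-y / (4 * b ^ 3 * s)) ^ 2 - (ε / (4 * b ^ 2 * s)) ^ 2)
      = -x ^ 2 * (ε / (4 * b ^ 2 * s)) ^ 2 := by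
  field_simp
  linear_combination (x ^ 2 - b ^ 2) * hε - hbxy

/-- The parameter relation of the case `c² < 1` of Section 5.3 of the paper:
`M` is real and `4·A·conj A·(M² − Q²) = −(A + conj A)²·Q²`; in particular `M² ≤ Q²`,
with equality iff `Re A = 0`. -/
theorem case_clt1_parameter_relation
    (A : ℂ) (hA : A ≠ 0) (c ε : ℝ) (hc : c ^ 2 < 1) (hε : ε ^ 2 = 1)
    (Q M : ℂ)
    (hQ : Q = (ε : ℂ) / (4 * A * conj A * (Real.sqrt (1 - c ^ 2) : ℂ)))
    (hM : M = Complex.I * (A - conj A)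
      / (8 * (A * conj A) ^ ((3 : ℂ) / 2) * (Real.sqrt (1 - c ^ 2) : ℂ))) :
    M.im = 0 ∧
    4 * A * conj A * (M ^ 2 - Q ^ 2) = -(A + conj A) ^ 2 * Q ^ 2 ∧
    M ^ 2 ≤ Q ^ 2 ∧
    (M ^ 2 = Q ^ 2 ↔ A.re = 0) := by
  set s := Real.sqrt (1 - c ^ 2)
  set b := ‖A‖
  have hs : s ≠ 0 := (Real.sqrt_pos.2 (by linarith)).ne'
  have hb : b ≠ 0 := norm_ne_zero_iff.2 hA
  have hAA : A * conj A = ((b ^ 2 : ℝ) : ℂ) := by rw [mul_conj', ofReal_pow]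
  set q := ε / (4 * b ^ 2 * s)
  set m := -A.im / (4 * b ^ 3 * s)
  have hQq : Q = q := by rw [hQ, mul_assoc 4 A, hAA, ofReal_div]; push_cast; ring
  have hMm : M = m := by
    rw [hM, mul_conj_cpow_three_halves, I_mul_sub_conj, ofReal_div]; push_cast; field_simp; ring
  have hq : q ≠ 0 := div_ne_zero (by rintro rfl; norm_num at hε) (by positivity)
  have key : b ^ 2 * (m ^ 2 - q ^ 2) = -A.re ^ 2 * q ^ 2 :=
    mul_sq_sub_sq_eq_of_sq_eq_add_sq hb hs (by rw [Complex.sq_norm, normSq_apply]; ring) hε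
  rw [hQq, hMm]
  refine ⟨ofReal_im m, ?_, ?_, ?_⟩
  · rw [mul_assoc 4 A, hAA, add_conj]
    exact_mod_cast by linear_combination 4 * key
  · exact_mod_cast sq_le_sq_of_mul_sq_sub_sq_eq key hb
  · exact_mod_cast sq_eq_sq_iff_of_mul_sq_sub_sq_eq key hb hq
end
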